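/- Let M be a positively t-determined S-module. Then dim r^*M ≤ dim M (Krull dimension). -/

import Mathlib

open MvPolynomial

noncomputable def mono (K : Type) [Field K] {n : ℕ} (a : Fin n → ℕ) : MvPolynomial (Fin n) K :=
  monomial (Finsupp.equivFunOnFinite.symm a) 1

def rmap {n : ℕ} (t a : Fin n → ℕ) : Fin n → ℕ := fun i => if 0 < a i then t i else 0

def sqrtv {n : ℕ} (a : Fin n → ℕ) : Fin n → ℕ := fun i => if 0 < a i then 1 else 0

structure MultiGrading (K : Type) [Field K] (n : ℕ) (M : Type) [AddCommGroup M]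
    [Module (MvPolynomial (Fin n) K) M] [Module K M]
    [IsScalarTower K (MvPolynomial (Fin n) K) M] where
  g : (Fin n → ℕ) → Submodule K M
  internal : DirectSum.IsInternal g
  compat : ∀ a b : Fin n → ℕ, ∀ m ∈ g a, mono K b • m ∈ g (a + b)

variable {K : Type} [Field K] {n : ℕ}

def PosDetermined {M : Type} [AddCommGroup M] [Module (MvPolynomial (Fin n) K) M] [Module K M]
    [IsScalarTower K (MvPolynomial (Fin n) K) M] (G : MultiGrading K n M) (t : Fin n → ℕ) : Prop :=
  ∀ (a : Fin n → ℕ) (i : Fin n), t i ≤ a i →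
    Set.BijOn (fun m => (X i : MvPolynomial (Fin n) K) • m) (G.g a : Set M) (G.g (a + Pi.single i 1) : Set M)

def IsRStar {M N : Type} [AddCommGroup M] [Module (MvPolynomial (Fin n) K) M] [Module K M]
    [IsScalarTower K (MvPolynomial (Fin n) K) M]
    [AddCommGroup N] [Module (MvPolynomial (Fin n) K) N] [Module K N]
    [IsScalarTower K (MvPolynomial (Fin n) K) N]
    (t : Fin n → ℕ) (G : MultiGrading K n M) (H : MultiGrading K n N) : Prop :=
  ∃ e : (Fin n → ℕ) → (M →ₗ[K] N),
    (∀ a, Set.InjOn (e a) (G.g (rmap t a))) ∧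
    (∀ a, e a '' (G.g (rmap t a)) = (H.g a : Set N)) ∧
    (∀ a b : Fin n → ℕ, ∀ m ∈ G.g (rmap t a),
      e (a + b) (mono K (rmap t (a + b) - rmap t a) • m) = mono K b • e a m)

noncomputable def mdim (R : Type) [CommRing R] (M : Type) [AddCommGroup M] [Module R M] :
    WithBot ℕ∞ :=
  ringKrullDim (R ⧸ (⊤ : Submodule R M).annihilator)

noncomputable def mdepth (K : Type) [Field K] (n : ℕ) (M : Type) [AddCommGroup M] [Module (MvPolynomial (Fin n) K) M] : ℕ :=
  sSup {k : ℕ | ∃ rs : List (MvPolynomial (Fin n) K), rs.length = k ∧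
    (∀ r ∈ rs, r ∈ Ideal.span (Set.range (X : Fin n → MvPolynomial (Fin n) K))) ∧
    RingTheory.Sequence.IsRegular M rs}

noncomputable def IsCM (K : Type) [Field K] (n : ℕ) (M : Type) [AddCommGroup M] [Module (MvPolynomial (Fin n) K) M] : Prop :=
  (mdepth K n M : WithBot ℕ∞) = mdim (MvPolynomial (Fin n) K) M

/-!
The ring `R/ann N` is a quotient of `R/ann M`, so it suffices to show `ann M ⊆ ann N`. Since `N` is
graded, it is enough to check that `f ∈ ann M` kills each homogeneous `e_a m` with `m ∈ M_{r(a)}`.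
Homogeneity of `m` forces every monomial `x^v` of `f` to kill `m`, and `x^v • e_a m` is
`e_{a+v} (x^{r(a+v) - r(a)} • m)`. Writing `x^v = x^{v-c} x^c` with `c = min(v, t - r(a))`, the
factor `x^{v-c}` only involves variables whose degree in `r(a) + c` is already `≥ t`, where
multiplication is injective by positive `t`-determinedness; hence `x^c • m = 0`, and `x^c`
divides `x^{r(a+v) - r(a)}`.
-/

section Monomials

lemma mono_add (u v : Fin n → ℕ) : mono K (u + v) = mono K u * mono K v := by
  rw [mono, mono, mono, monomial_mul, one_mul]
  congr 2
  exact Finsupp.ext fun _ => rfl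

lemma mono_zero : mono K (0 : Fin n → ℕ) = 1 := by
  rw [mono, show Finsupp.equivFunOnFinite.symm (0 : Fin n → ℕ) = 0 from Finsupp.ext fun _ => rfl]
  rfl

lemma mono_single (i : Fin n) : mono K (Pi.single i 1) = X i := by
  rw [mono, Finsupp.equivFunOnFinite_symm_single, X]

lemma mono_smul_mono_smul {M : Type} [AddCommGroup M] [Module (MvPolynomial (Fin n) K) M]
    (u v : Fin n → ℕ) (m : M) :
    mono K u • mono K v • m = mono K (u + v) • m := by
  rw [← mul_smul, mono_add]

lemma smul_eq_sum_coeff_smul_mono_smul {M : Type} [AddCommGroup M]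
    [Module (MvPolynomial (Fin n) K) M] [Module K M] [IsScalarTower K (MvPolynomial (Fin n) K) M]
    (f : MvPolynomial (Fin n) K) (m : M) :
    f • m = ∑ v ∈ f.support, coeff v f • mono K (⇑v) • m := by
  conv_lhs => rw [f.as_sum]
  rw [Finset.sum_smul]
  refine Finset.sum_congr rfl fun v _ => ?_
  rw [← smul_assoc]
  congr 1
  rw [mono, Finsupp.equivFunOnFinite_symm_coe, smul_monomial, smul_eq_mul, mul_one]

end Monomials

section Grading

variable {M : Type} [AddCommGroup M] [Module (MvPolynomial (Fin n) K) M] [Module K M]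
  [IsScalarTower K (MvPolynomial (Fin n) K) M]

theorem MultiGrading.mono_smul_eq_zero_of_smul_eq_zero (G : MultiGrading K n M)
    {d : Fin n → ℕ} {m : M} (hm : m ∈ G.g d) {f : MvPolynomial (Fin n) K} (hf : f • m = 0)
    {v : Fin n →₀ ℕ} (hv : v ∈ f.support) : mono K (⇑v) • m = 0 := by
  have hindep : iSupIndep fun w : Fin n →₀ ℕ => G.g (d + ⇑w) :=
    G.internal.submodule_iSupIndep.comp ((add_right_injective d).comp DFunLike.coe_injective)
  have hterm := (iSupIndep_iff_finsetSum_eq_zero_imp_eq_zero _).mp hindep f.support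
    (fun w => coeff w f • mono K (⇑w) • m)
    (fun w _ => Submodule.smul_mem _ _ (G.compat d w m hm))
    (by rw [← smul_eq_sum_coeff_smul_mono_smul, hf]) v hv
  exact (smul_eq_zero.mp hterm).resolve_left (mem_support_iff.mp hv)

theorem PosDetermined.eq_zero_of_mono_smul_eq_zero {G : MultiGrading K n M} {t : Fin n → ℕ}
    (hM : PosDetermined G t) {u d : Fin n → ℕ} (hud : ∀ i, 0 < u i → t i ≤ d i) {m : M}
    (hm : m ∈ G.g d) (h : mono K u • m = 0) : m = 0 := by
  induction u using WellFoundedLT.induction generalizing d m with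
  | _ u ih =>
  by_cases hu : u = 0
  · rwa [hu, mono_zero, one_smul] at h
  obtain ⟨i, hi⟩ : ∃ i, u i ≠ 0 := Function.ne_iff.mp hu
  have hsplit : u - Pi.single i 1 + Pi.single i 1 = u :=
    tsub_add_cancel_of_le fun j => by
      rcases eq_or_ne j i with rfl | hj
      · simpa [Nat.one_le_iff_ne_zero] using hi
      · simp [hj]
  have hlt : u - Pi.single i 1 < u :=
    Pi.lt_def.mpr ⟨tsub_le_self, i, by simp only [Pi.sub_apply, Pi.single_eq_same]; omega⟩
  have hXm : (X i : MvPolynomial (Fin n) K) • m ∈ G.g (d + Pi.single i 1) :=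
    mono_single (K := K) i ▸ G.compat d _ m hm
  have hXm0 : (X i : MvPolynomial (Fin n) K) • m = 0 := by
    refine ih _ hlt (fun j hj => (hud j ?_).trans le_self_add) hXm ?_
    · exact lt_of_lt_of_le hj (tsub_le_self (a := u j))
    · rwa [← mono_single, mono_smul_mono_smul, hsplit]
  exact (hM d i (hud i (Nat.pos_of_ne_zero hi))).injOn hm (zero_mem _) (by simpa using hXm0)

theorem PosDetermined.mono_rmap_sub_smul_eq_zero {G : MultiGrading K n M} {t : Fin n → ℕ}
    (hM : PosDetermined G t) {a b : Fin n → ℕ} {m : M} (hm : m ∈ G.g (rmap t a))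
    (h : mono K b • m = 0) : mono K (rmap t (a + b) - rmap t a) • m = 0 := by
  set c : Fin n → ℕ := fun i => min (b i) (t i - rmap t a i)
  have hcb : c ≤ b := fun i => min_le_left _ _
  have hcD : c ≤ rmap t (a + b) - rmap t a := fun i => by
    simp only [c, rmap, Pi.add_apply, Pi.sub_apply]
    split_ifs <;> omega
  have hc : mono K c • m = 0 := by
    refine hM.eq_zero_of_mono_smul_eq_zero (u := b - c) (fun i hi => ?_) (G.compat _ c m hm) ?_
    · simp only [c, rmap, Pi.add_apply, Pi.sub_apply] at hi ⊢
      split_ifs at hi ⊢ <;> omega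
    · rwa [mono_smul_mono_smul, tsub_add_cancel_of_le hcb]
  rw [← tsub_add_cancel_of_le hcD, ← mono_smul_mono_smul, hc, smul_zero]

end Grading

theorem mdim_le_of_annihilator_le {R M N : Type} [CommRing R] [AddCommGroup M] [Module R M]
    [AddCommGroup N] [Module R N]
    (h : (⊤ : Submodule R M).annihilator ≤ (⊤ : Submodule R N).annihilator) :
    mdim R N ≤ mdim R M :=
  ringKrullDim_le_of_surjective (Ideal.Quotient.factor h) (Ideal.Quotient.factor_surjective h)

theorem IsRStar.annihilator_le {M N : Type} [AddCommGroup M] [Module (MvPolynomial (Fin n) K) M]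
    [Module K M] [IsScalarTower K (MvPolynomial (Fin n) K) M]
    [AddCommGroup N] [Module (MvPolynomial (Fin n) K) N] [Module K N]
    [IsScalarTower K (MvPolynomial (Fin n) K) N]
    {t : Fin n → ℕ} {G : MultiGrading K n M} {H : MultiGrading K n N}
    (hM : PosDetermined G t) (hN : IsRStar t G H) :
    (⊤ : Submodule (MvPolynomial (Fin n) K) M).annihilator ≤
      (⊤ : Submodule (MvPolynomial (Fin n) K) N).annihilator := by
  obtain ⟨e, -, he_image, he_smul⟩ := hN
  intro f hf
  rw [Submodule.mem_annihilator] at hf ⊢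
  intro x _
  have hx : x ∈ ⨆ a, H.g a := H.internal.submodule_iSup_eq_top ▸ Submodule.mem_top
  refine Submodule.iSup_induction H.g (motive := fun y => f • y = 0) hx (fun a x hxa => ?_)
    (smul_zero f) fun x y hx hy => by rw [smul_add, hx, hy, add_zero]
  obtain ⟨m, hm, rfl⟩ : x ∈ e a '' G.g (rmap t a) := (he_image a).symm ▸ hxa
  rw [smul_eq_sum_coeff_smul_mono_smul]
  refine Finset.sum_eq_zero fun v hv => ?_
  have hvm := G.mono_smul_eq_zero_of_smul_eq_zero hm (hf m trivial) hv
  rw [← he_smul a v m hm, hM.mono_rmap_sub_smul_eq_zero hm hvm, map_zero, smul_zero]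

theorem dim_rstar_le_general {M N : Type} [AddCommGroup M] [Module (MvPolynomial (Fin n) K) M]
    [Module K M] [IsScalarTower K (MvPolynomial (Fin n) K) M]
    [AddCommGroup N] [Module (MvPolynomial (Fin n) K) N] [Module K N]
    [IsScalarTower K (MvPolynomial (Fin n) K) N]
    (t : Fin n → ℕ) (G : MultiGrading K n M) (hM : PosDetermined G t)
    (H : MultiGrading K n N) (hN : IsRStar t G H) :
    mdim (MvPolynomial (Fin n) K) N ≤ mdim (MvPolynomial (Fin n) K) M :=
  mdim_le_of_annihilator_le (hN.annihilator_le hM)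

/-- `dim r^*M ≤ dim M`. -/
theorem dim_rstar_le {M N : Type} [AddCommGroup M] [Module (MvPolynomial (Fin n) K) M]
    [Module K M] [IsScalarTower K (MvPolynomial (Fin n) K) M]
    [AddCommGroup N] [Module (MvPolynomial (Fin n) K) N] [Module K N]
    [IsScalarTower K (MvPolynomial (Fin n) K) N]
    (t : Fin n → ℕ) (ht : ∀ i, 1 ≤ t i)
    (G : MultiGrading K n M) [Module.Finite (MvPolynomial (Fin n) K) M]
    (hM : PosDetermined G t)
    (H : MultiGrading K n N) (hN : IsRStar t G H) :
    mdim (MvPolynomial (Fin n) K) N ≤ mdim (MvPolynomial (Fin n) K) M :=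
  dim_rstar_le_general t G hM H hN
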